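/- Let p be a probability vector of length 2n with p_i monotonically nonincreasing in i. Then gain(2n,p) − gain(n,p) = Σ_{i=1}^{n} D_i where D_i = p_{2i-1} log₂(2p_{2i-1}/(p_{2i-1}+p_{2i})) + p_{2i} log₂(2p_{2i}/(p_{2i-1}+p_{2i})), and this difference is bounded above by Σ_{i=1}^{n} (p_{2i-1} − p_{2i})²/((p_{2i-1}+p_{2i}) ln 2) ≤ (p₁ − p_{2n})/ln 2. -/

import Mathlib

/-!
Merging the pair `(a, b)` into `a + b` raises the entropy by
`a log₂ (2a/(a+b)) + b log₂ (2b/(a+b))`, while `log₂ (2n) - log₂ n = 1` absorbs the total mass;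
this gives the identity. Each pair term is a Kullback–Leibler divergence from the uniform split,
hence at most the corresponding χ²-divergence `(a - b)²/((a + b) ln 2)` by `ln x ≤ x - 1`.
For `b ≤ a` that is at most `(a - b)/ln 2`, and the pair gaps of a nonincreasing sequence
sum to at most its total drop `p₀ - p_{2n-1}`.
-/

open Finset Real

lemma Finset.sum_range_two_mul {M : Type*} [AddCommMonoid M] (f : ℕ → M) (n : ℕ) :
    ∑ i ∈ range (2 * n), f i = ∑ i ∈ range n, (f (2 * i) + f (2 * i + 1)) := by
  induction n with
  | zero => simp
  | succ n ih => rw [mul_add, mul_one, sum_range_succ, sum_range_succ, sum_range_succ, ih, add_assoc]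

lemma mul_logb_two_mul_div {a b : ℝ} (ha : 0 ≤ a) (hb : 0 ≤ b) :
    a * logb 2 (2 * a / (a + b)) = a + a * logb 2 a - a * logb 2 (a + b) := by
  rcases ha.eq_or_lt with rfl | ha
  · simp
  rw [logb_div (by positivity) (by positivity), logb_mul two_ne_zero ha.ne',
    logb_self_eq_one one_lt_two]
  ring

lemma pair_divergence_eq {a b : ℝ} (ha : 0 ≤ a) (hb : 0 ≤ b) :
    a * logb 2 (2 * a / (a + b)) + b * logb 2 (2 * b / (a + b))
      = (a + b) + (a * logb 2 a + b * logb 2 b) - (a + b) * logb 2 (a + b) := by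
  rw [mul_logb_two_mul_div ha hb, add_comm a b, mul_logb_two_mul_div hb ha]
  ring

lemma pair_divergence_le {a b : ℝ} (ha : 0 ≤ a) (hb : 0 ≤ b) :
    a * logb 2 (2 * a / (a + b)) + b * logb 2 (2 * b / (a + b))
      ≤ (a - b) ^ 2 / ((a + b) * log 2) := by
  rcases (add_nonneg ha hb).eq_or_lt with hs | hs
  · obtain ⟨rfl, rfl⟩ : a = 0 ∧ b = 0 := ⟨by linarith, by linarith⟩
    simp
  have mul_log_le {x : ℝ} (hx : 0 ≤ x) : x * log (2 * x / (a + b)) ≤ x * (2 * x / (a + b) - 1) := by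
    rcases hx.eq_or_lt with rfl | hx
    · simp
    exact mul_le_mul_of_nonneg_left (log_le_sub_one_of_pos (by positivity)) hx.le
  have chi_sq : a * (2 * a / (a + b) - 1) + b * (2 * b / (a + b) - 1) = (a - b) ^ 2 / (a + b) := by
    field_simp
    ring
  have to_log : a * logb 2 (2 * a / (a + b)) + b * logb 2 (2 * b / (a + b))
      = (a * log (2 * a / (a + b)) + b * log (2 * b / (a + b))) / log 2 := by
    simp only [logb]
    ring
  rw [to_log, ← div_div]
  gcongr
  linarith [mul_log_le ha, mul_log_le hb]

lemma sq_sub_div_add_le_sub {a b : ℝ} (hb : 0 ≤ b) (hab : b ≤ a) :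
    (a - b) ^ 2 / (a + b) ≤ a - b :=
  div_le_of_le_mul₀ (by linarith) (by linarith) (by nlinarith)

lemma sum_pair_gaps_le {p : ℕ → ℝ} {n : ℕ} (hmono : ∀ i, i + 1 < 2 * n → p (i + 1) ≤ p i) :
    ∑ i ∈ range n, (p (2 * i) - p (2 * i + 1)) ≤ p 0 - p (2 * n - 1) := by
  calc ∑ i ∈ range n, (p (2 * i) - p (2 * i + 1))
      = ∑ j ∈ (range n).image (2 * ·), (p j - p (j + 1)) := by
        rw [sum_image fun x _ y _ h => by omega]
    _ ≤ ∑ j ∈ range (2 * n - 1), (p j - p (j + 1)) := by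
        refine sum_le_sum_of_subset_of_nonneg ?_ fun j hj _ => ?_
        · intro j hj
          simp only [mem_image, mem_range] at hj ⊢
          omega
        · exact sub_nonneg.2 (hmono j (by simp only [mem_range] at hj; omega))
    _ = p 0 - p (2 * n - 1) := sum_range_sub' p _

/-- For a monotonically nonincreasing probability vector `p` of length `2n`,
`gain(2n,p) − gain(n,p) = Σ Dᵢ ≤ Σ (p₂ᵢ − p₂ᵢ₊₁)²/((p₂ᵢ + p₂ᵢ₊₁) ln 2) ≤ (p₀ − p_{2n−1})/ln 2`,
where `gain(m,p) = log₂ m − H(p)` and the coarsened vector merges adjacent pairs. -/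
theorem stmt12 (n : ℕ) (hn : 0 < n) (p : ℕ → ℝ)
    (hp : ∀ i, i < 2 * n → 0 ≤ p i)
    (hsum : ∑ i ∈ Finset.range (2 * n), p i = 1)
    (hmono : ∀ i, i + 1 < 2 * n → p (i + 1) ≤ p i) :
    ((Real.logb 2 (2 * n) - (- ∑ i ∈ Finset.range (2 * n), p i * Real.logb 2 (p i)))
        - (Real.logb 2 n - (- ∑ i ∈ Finset.range n,
            (p (2 * i) + p (2 * i + 1)) * Real.logb 2 (p (2 * i) + p (2 * i + 1))))
      = ∑ i ∈ Finset.range n,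
          (p (2 * i) * Real.logb 2 (2 * p (2 * i) / (p (2 * i) + p (2 * i + 1)))
            + p (2 * i + 1) * Real.logb 2 (2 * p (2 * i + 1) / (p (2 * i) + p (2 * i + 1)))))
    ∧ (∑ i ∈ Finset.range n,
          (p (2 * i) * Real.logb 2 (2 * p (2 * i) / (p (2 * i) + p (2 * i + 1)))
            + p (2 * i + 1) * Real.logb 2 (2 * p (2 * i + 1) / (p (2 * i) + p (2 * i + 1))))
        ≤ ∑ i ∈ Finset.range n,
            (p (2 * i) - p (2 * i + 1)) ^ 2 / ((p (2 * i) + p (2 * i + 1)) * Real.log 2))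
    ∧ (∑ i ∈ Finset.range n,
          (p (2 * i) - p (2 * i + 1)) ^ 2 / ((p (2 * i) + p (2 * i + 1)) * Real.log 2)
        ≤ (p 0 - p (2 * n - 1)) / Real.log 2) := by
  have hodd : ∀ i ∈ range n, 0 ≤ p (2 * i + 1) := fun i hi => hp _ (by simp at hi; omega)
  have hgap : ∀ i ∈ range n, p (2 * i + 1) ≤ p (2 * i) := fun i hi => hmono _ (by simp at hi; omega)
  have heven : ∀ i ∈ range n, 0 ≤ p (2 * i) := fun i hi => (hodd i hi).trans (hgap i hi)
  refine ⟨?_, sum_le_sum fun i hi => pair_divergence_le (heven i hi) (hodd i hi), ?_⟩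
  · have hmass : ∑ i ∈ range n, (p (2 * i) + p (2 * i + 1)) = 1 := sum_range_two_mul p n ▸ hsum
    have hlog : logb 2 (2 * n) = 1 + logb 2 n := by
      rw [logb_mul two_ne_zero (by positivity), logb_self_eq_one one_lt_two]
    rw [sum_congr rfl fun i hi => pair_divergence_eq (heven i hi) (hodd i hi),
      sum_range_two_mul (fun i => p i * logb 2 (p i)), hlog]
    simp only [sum_add_distrib, sum_sub_distrib, hmass]
    ring
  · calc _ ≤ ∑ i ∈ range n, (p (2 * i) - p (2 * i + 1)) / log 2 :=
          sum_le_sum fun i hi => by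
            rw [← div_div]
            exact div_le_div_of_nonneg_right (sq_sub_div_add_le_sub (hodd i hi) (hgap i hi))
              (log_pos one_lt_two).le
      _ = (∑ i ∈ range n, (p (2 * i) - p (2 * i + 1))) / log 2 := (sum_div ..).symm
      _ ≤ _ := div_le_div_of_nonneg_right (sum_pair_gaps_le hmono) (log_pos one_lt_two).le
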